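/- arXiv:1411.4025 — 4 statements merged into one kernel-verified Lean document; each statement's English description precedes it below -/
import Mathlib

section
/- Let P ∈ ℚ[X₁, …, X_n] be a polynomial of total degree at most d. Then the ℚ-linear map λ_P : ℚ[Λ] → ℚ determined by λ_P([v]) = P(v) for v ∈ Λ vanishes identically on I^{d+1}. Consequently λ_P induces a well-defined ℚ-linear map ℚ[Λ]/I^{d+1} → ℚ, i.e. λ_P extends continuously to the I-adic completion of ℚ[Λ]. -/
/-! Write `λ_f : k[G] → k` for the linear extension of `f : G → k`. Since
`λ_f (([h] - 1) * x) = λ_{Δ_h f} x` and the augmentation ideal `I` is spanned by the `[h] - 1`,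
`λ_f` kills `I ^ (d + 2)` iff `λ_{Δ_h f}` kills `I ^ (d + 1)` for every `h`. So the functions
whose `λ` kills `I ^ (d + 1)` form a filtration by "degree `≤ d`" in the sense of finite
differences; it starts with the constants, contains additive maps in degree `1`, and is
multiplicative by the Leibniz rule for `Δ_h`. Hence a polynomial of total degree `≤ d` in additive
coordinates has degree `≤ d`. -/

open MvPolynomial fwdDiff

namespace AddMonoidAlgebra

variable {k G : Type*} [CommRing k]

variable (k G) in
noncomputable def dualOfFun : (G → k) →ₗ[k] Module.Dual k k[G] :=
  (coeffLinearEquiv k).dualMap.toLinearMap ∘ₗ Finsupp.bilinearCombination k k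

lemma dualOfFun_single (f : G → k) (g : G) (c : k) :
    dualOfFun k G f (single g c) = c * f g := by
  simp [dualOfFun]

variable [AddCommMonoid G]

variable (k G) in
noncomputable def augIdeal : Ideal k[G] := RingHom.ker (lift k k G 1)

lemma single_sub_one_mem_augIdeal (g : G) : single g (1 : k) - 1 ∈ augIdeal k G := by
  simp [augIdeal, RingHom.mem_ker, lift_single]

lemma sub_augmentation_mem_span (x : k[G]) :
    x - lift k k G 1 x • 1 ∈ Submodule.span k (Set.range fun g : G => single g (1 : k) - 1) := by
  induction x using induction_linear with
  | zero => simp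
  | add x y hx hy =>
    rw [map_add, add_smul, add_sub_add_comm]
    exact add_mem hx hy
  | single g c =>
    have : single g c - lift k k G 1 (single g c) • 1 = c • (single g 1 - 1) := by
      simp [lift_single, smul_sub, smul_single]
    rw [this]
    exact Submodule.smul_mem _ c (Submodule.subset_span ⟨g, rfl⟩)

lemma augIdeal_subset_span :
    (augIdeal k G : Set k[G]) ⊆ Submodule.span k (Set.range fun g : G => single g (1 : k) - 1) := by
  intro x hx
  simpa [RingHom.mem_ker.1 hx] using sub_augmentation_mem_span x

lemma dualOfFun_single_sub_one_mul (f : G → k) (h : G) (x : k[G]) :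
    dualOfFun k G f ((single h 1 - 1) * x) = dualOfFun k G (Δ_[h] f) x := by
  induction x using induction_linear with
  | zero => simp
  | add x y hx hy => rw [mul_add, map_add, map_add, hx, hy]
  | single g c =>
    simp [sub_mul, one_def, dualOfFun_single, fwdDiff, add_comm, mul_sub]

lemma dualOfFun_eq_zero_of_mem_augIdeal_mul {f : G → k} {J : Ideal k[G]}
    (hf : ∀ h, ∀ y ∈ J, dualOfFun k G (Δ_[h] f) y = 0) {x : k[G]} (hx : x ∈ augIdeal k G * J) :
    dualOfFun k G f x = 0 := by
  refine Submodule.mul_induction_on hx (fun a ha y hy => ?_) fun x y hx hy => ?_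
  · replace ha := augIdeal_subset_span ha
    induction ha using Submodule.span_induction with
    | mem a ha =>
      obtain ⟨h, rfl⟩ := ha
      rw [dualOfFun_single_sub_one_mul, hf h y hy]
    | zero => simp
    | add a b _ _ ha hb => rw [add_mul, map_add, ha, hb, add_zero]
    | smul c a _ ha => rw [smul_mul_assoc, map_smul, ha, smul_zero]
  · rw [map_add, hx, hy, add_zero]

variable (k G) in
noncomputable def funDegreeLE (d : ℕ) : Submodule k (G → k) :=
  ((augIdeal k G ^ (d + 1)).restrictScalars k).dualAnnihilator.comap (dualOfFun k G)

lemma mem_funDegreeLE {f : G → k} {d : ℕ} :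
    f ∈ funDegreeLE k G d ↔ ∀ x ∈ augIdeal k G ^ (d + 1), dualOfFun k G f x = 0 :=
  Submodule.mem_dualAnnihilator _

lemma funDegreeLE_mono {d e : ℕ} (hde : d ≤ e) : funDegreeLE k G d ≤ funDegreeLE k G e :=
  fun _ hf => mem_funDegreeLE.2 fun x hx =>
    mem_funDegreeLE.1 hf x (Ideal.pow_le_pow_right (by omega) hx)

lemma mem_funDegreeLE_succ_iff {f : G → k} {d : ℕ} :
    f ∈ funDegreeLE k G (d + 1) ↔ ∀ h, Δ_[h] f ∈ funDegreeLE k G d := by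
  refine ⟨fun hf h => mem_funDegreeLE.2 fun x hx => ?_,
    fun hf => mem_funDegreeLE.2 fun x hx => ?_⟩
  · rw [← dualOfFun_single_sub_one_mul]
    refine mem_funDegreeLE.1 hf _ ?_
    rw [pow_succ']
    exact Ideal.mul_mem_mul (single_sub_one_mem_augIdeal h) hx
  · rw [pow_succ'] at hx
    exact dualOfFun_eq_zero_of_mem_augIdeal_mul (fun h => mem_funDegreeLE.1 (hf h)) hx

lemma mem_funDegreeLE_zero_iff {f : G → k} :
    f ∈ funDegreeLE k G 0 ↔ ∃ c, f = fun _ => c := by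
  refine ⟨fun hf => ⟨f 0, funext fun g => ?_⟩, ?_⟩
  · have := mem_funDegreeLE.1 hf _ (by simpa using single_sub_one_mem_augIdeal g)
    simpa [one_def, dualOfFun_single, sub_eq_zero] using this
  · rintro ⟨c, rfl⟩
    refine mem_funDegreeLE.2 fun x hx => dualOfFun_eq_zero_of_mem_augIdeal_mul (J := ⊤) ?_ ?_
    · simp [← Pi.zero_def]
    · simpa using hx

lemma mul_mem_funDegreeLE {f g : G → k} {a b : ℕ} (hf : f ∈ funDegreeLE k G a)
    (hg : g ∈ funDegreeLE k G b) : f * g ∈ funDegreeLE k G (a + b) := by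
  induction a generalizing f b g with
  | zero =>
    obtain ⟨c, rfl⟩ := mem_funDegreeLE_zero_iff.1 hf
    rw [zero_add]
    exact Submodule.smul_mem _ c hg
  | succ a iha =>
    induction b generalizing g with
    | zero =>
      obtain ⟨c, rfl⟩ := mem_funDegreeLE_zero_iff.1 hg
      rw [mul_comm]
      exact Submodule.smul_mem _ c hf
    | succ b ihb =>
      rw [show a + 1 + (b + 1) = a + b + 1 + 1 by omega, mem_funDegreeLE_succ_iff]
      intro h
      have hΔf := mem_funDegreeLE_succ_iff.1 hf h
      have hΔg := mem_funDegreeLE_succ_iff.1 hg h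
      rw [show Δ_[h] (f * g) = Δ_[h] f * g + f * Δ_[h] g + Δ_[h] f * Δ_[h] g from
        fwdDiff_smul h f g]
      refine add_mem (add_mem ?_ ?_) (funDegreeLE_mono (by omega) (iha hΔf hΔg))
      · simpa [add_assoc] using iha hΔf hg
      · simpa [add_right_comm] using ihb hΔg

lemma one_mem_funDegreeLE_zero : (1 : G → k) ∈ funDegreeLE k G 0 :=
  mem_funDegreeLE_zero_iff.2 ⟨1, rfl⟩

lemma pow_mem_funDegreeLE {f : G → k} {a : ℕ} (hf : f ∈ funDegreeLE k G a) (m : ℕ) :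
    f ^ m ∈ funDegreeLE k G (m * a) := by
  induction m with
  | zero => simpa using one_mem_funDegreeLE_zero
  | succ m ih => simpa [pow_succ, add_mul] using mul_mem_funDegreeLE ih hf

lemma prod_mem_funDegreeLE {ι : Type*} (s : Finset ι) {f : ι → G → k} {e : ι → ℕ}
    (hf : ∀ i ∈ s, f i ∈ funDegreeLE k G (e i)) :
    ∏ i ∈ s, f i ∈ funDegreeLE k G (∑ i ∈ s, e i) := by
  classical
  induction s using Finset.induction_on with
  | empty => simpa using one_mem_funDegreeLE_zero
  | insert i s hi ih =>
    rw [Finset.prod_insert hi, Finset.sum_insert hi]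
    exact mul_mem_funDegreeLE (hf i (by simp)) (ih fun j hj => hf j (by simp [hj]))

lemma addMonoidHom_mem_funDegreeLE_one (φ : G →+ k) : ⇑φ ∈ funDegreeLE k G 1 :=
  mem_funDegreeLE_succ_iff.2 fun h =>
    mem_funDegreeLE_zero_iff.2 ⟨φ h, funext fun g => by simp [fwdDiff]⟩

lemma eval_mem_funDegreeLE {σ : Type*} (φ : σ → G →+ k) {P : MvPolynomial σ k} {d : ℕ}
    (hP : P.totalDegree ≤ d) : (fun g => eval (fun i => φ i g) P) ∈ funDegreeLE k G d := by
  have hsum : (fun g => eval (fun i => φ i g) P)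
      = ∑ s ∈ P.support, P.coeff s • ∏ i ∈ s.support, ⇑(φ i) ^ s i := by
    ext g
    simp [eval_eq, Finset.sum_apply, Finset.prod_apply]
  rw [hsum]
  refine Submodule.sum_mem _ fun s hs => Submodule.smul_mem _ _ ?_
  refine funDegreeLE_mono ((le_totalDegree hs).trans hP) ?_
  simpa [Finsupp.sum] using prod_mem_funDegreeLE s.support fun i _ =>
    pow_mem_funDegreeLE (addMonoidHom_mem_funDegreeLE_one (φ i)) (s i)

end AddMonoidAlgebra

/-- Lemma `poleval` (a) of Dasgupta–Spieß: if `P ∈ ℚ[X₁, …, Xₙ]` has total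
degree at most `d`, then the `ℚ`-linear map `λ_P : ℚ[ℤⁿ] → ℚ` determined by
`[v] ↦ P(v)` vanishes on the `(d+1)`-st power of the augmentation ideal `I`;
hence it extends continuously to the `I`-adic completion of `ℚ[ℤⁿ]`. -/
theorem polynomial_eval_vanishes_on_pow_augmentation_ideal
    (n d : ℕ) (P : MvPolynomial (Fin n) ℚ) (hP : P.totalDegree ≤ d)
    (x : AddMonoidAlgebra ℚ (Fin n → ℤ))
    (hx : x ∈ (RingHom.ker ((AddMonoidAlgebra.lift ℚ ℚ (Fin n → ℤ)) 1)) ^ (d + 1)) :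
    Finsupp.linearCombination ℚ
      (fun v : Fin n → ℤ => MvPolynomial.eval (fun i => (v i : ℚ)) P) x.coeff = 0 :=
  AddMonoidAlgebra.mem_funDegreeLE.1
    (AddMonoidAlgebra.eval_mem_funDegreeLE
      (fun i => (Int.castAddHom ℚ).comp (Pi.evalAddMonoidHom (fun _ => ℤ) i)) hP) x hx
end

section
/- Let ℓ be a prime number, ζ ∈ ℂ a primitive ℓ-th root of unity, and m an integer with 0 ≤ m ≤ ℓ − 2. If x ∈ ℚ satisfies (1 − ζ)^m · x ∈ ℤ[ζ], then x ∈ ℤ. Equivalently, (1 − ζ)^{−m}·ℤ[ζ] ∩ ℚ = ℤ for m ≤ ℓ − 2. -/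
/-!
Since `ℓ = ∏_{k=1}^{ℓ-1} (1 - ζ^k)` and each factor is divisible by `1 - ζ`, the prime `ℓ` is
divisible by `(1 - ζ)^(ℓ-1)` in `ℤ[ζ]`. Raising `(1 - ζ)^m x` to the power `ℓ - 1` therefore
shows `ℓ^m x^(ℓ-1) ∈ ℤ[ζ]`; this rational number is integral over `ℤ`, hence an integer. So the
denominator `d` of `x` satisfies `d^(ℓ-1) ∣ ℓ^m`, and `m < ℓ - 1` forces `d = 1`.
-/

theorem Nat.eq_one_of_pow_dvd_prime_pow {p a m n : ℕ} (hp : p.Prime) (hmn : m < n)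
    (h : a ^ n ∣ p ^ m) : a = 1 := by
  obtain ⟨k, -, rfl⟩ := (Nat.dvd_prime_pow hp).1 ((dvd_pow_self a (by omega)).trans h)
  rw [← pow_mul, Nat.pow_dvd_pow_iff_le_right hp.one_lt] at h
  obtain rfl : k = 0 := by nlinarith
  rfl

theorem Rat.exists_int_eq_of_prime_pow_mul_pow_eq_int {p m n : ℕ} (hp : p.Prime) (hmn : m < n)
    {x : ℚ} {b : ℤ} (h : (p : ℚ) ^ m * x ^ n = b) : ∃ a : ℤ, x = a := by
  have hx : x ^ n = Rat.divInt b ((p : ℤ) ^ m) := by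
    rw [Rat.divInt_eq_div, ← h]
    push_cast
    rw [mul_div_cancel_left₀ _ (pow_ne_zero _ (Nat.cast_ne_zero.2 hp.ne_zero))]
  have hden : x.den ^ n ∣ p ^ m := by
    exact_mod_cast Rat.den_pow x n ▸ hx ▸ Rat.den_dvd b ((p : ℤ) ^ m)
  exact ⟨x.num, ((Rat.den_eq_one_iff x).1 (Nat.eq_one_of_pow_dvd_prime_pow hp hmn hden)).symm⟩

open Algebra in
theorem IsPrimitiveRoot.order_pow_mul_pow_mem_adjoin {R : Type*} [CommRing R] [IsDomain R]
    {ℓ m : ℕ} {ζ y : R} (hζ : IsPrimitiveRoot ζ ℓ) (hℓ : 0 < ℓ)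
    (hy : (1 - ζ) ^ m * y ∈ ℤ[ζ]) : (ℓ : R) ^ m * y ^ (ℓ - 1) ∈ ℤ[ζ] := by
  obtain ⟨z, hz, hℓz⟩ := hζ.self_sub_one_pow_dvd_order (k := ℓ - 1) (by omega)
  have hsplit : (ℓ : R) ^ m * y ^ (ℓ - 1) =
      ((1 - ζ) ^ m * y) ^ (ℓ - 1) * ((-1) ^ (ℓ - 1) * z) ^ m := by
    rw [hℓz, ← neg_sub 1 ζ, neg_pow]
    ring
  have hsign : (-1 : R) ^ (ℓ - 1) ∈ ℤ[ζ] := Subalgebra.pow_mem _ (neg_mem (one_mem _)) _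
  rw [hsplit]
  exact mul_mem (pow_mem hy _) (pow_mem (mul_mem hsign hz) _)

/-- if `ζ` is a primitive `ℓ`-th root of unity (`ℓ` prime), `0 ≤ m ≤ ℓ - 2`,
and `x ∈ ℚ` satisfies `(1 - ζ)^m · x ∈ ℤ[ζ]`, then `x ∈ ℤ`;
equivalently `(1 - ζ)^{-m} ℤ[ζ] ∩ ℚ = ℤ` for `m ≤ ℓ - 2`. -/
theorem rat_int_of_one_sub_primitiveRoot_pow_mul_mem_adjoin
    (ℓ : ℕ) (hℓ : ℓ.Prime) (ζ : ℂ) (hζ : IsPrimitiveRoot ζ ℓ)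
    (m : ℕ) (hm : m ≤ ℓ - 2) (x : ℚ)
    (hx : (1 - ζ) ^ m * (x : ℂ) ∈ Algebra.adjoin ℤ {ζ}) :
    ∃ a : ℤ, x = (a : ℚ) := by
  have hmn : m < ℓ - 1 := by have := hℓ.two_le; omega
  have hmem : ((ℓ ^ m * x ^ (ℓ - 1) : ℚ) : ℂ) ∈ Algebra.adjoin ℤ {ζ} := by
    push_cast
    exact hζ.order_pow_mul_pow_mem_adjoin hℓ.pos hx
  have hint : IsIntegral ℤ ((ℓ ^ m * x ^ (ℓ - 1) : ℚ) : ℂ) :=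
    adjoin_le_integralClosure (hζ.isIntegral hℓ.pos) hmem
  obtain ⟨b, hb⟩ := hint.exists_int_iff_exists_rat.1 ⟨_, rfl⟩
  exact Rat.exists_int_eq_of_prime_pow_mul_pow_eq_int hℓ hmn (by exact_mod_cast hb)
end

section
/- Let R be a commutative ring, w₁, …, w_m ∈ ℤⁿ linearly independent over ℚ, N a positive integer, u₁, …, u_m ∈ R, and h : ℤⁿ → R a function satisfying h(x + wᵢ) = uᵢ·h(x) for all x ∈ ℤⁿ and all i. Then in the group algebra R[ℤⁿ] one has the identity Σ_{x ∈ ℤⁿ ∩ P(N·w₁, …, N·w_m)} h(x)·[x] = (Σ_{x ∈ ℤⁿ ∩ P(w₁, …, w_m)} h(x)·[x]) · ∏_{i=1}^{m} (Σ_{j=0}^{N−1} uᵢ^j·[j·wᵢ]), both sums being finite. -/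
/-!
A lattice point of `P(N w₁, …, N w_m)` has real coefficients `sᵢ ∈ (0, N]` along the `wᵢ`; writing
`gᵢ = ⌈sᵢ⌉ - 1 ∈ {0, …, N - 1}` and `tᵢ = sᵢ - gᵢ ∈ (0, 1]` decomposes it as `x + ∑ gᵢ wᵢ` with `x`
a lattice point of `P(w₁, …, w_m)`. The decomposition is unique because `ℚ`-linear independence
of the `wᵢ` persists over `ℝ`, and `gᵢ` is then recovered as `⌈tᵢ + gᵢ⌉ - 1`. Since
`h(x + ∑ gᵢ wᵢ) = (∏ uᵢ ^ gᵢ) h(x)`, the left-hand sum is the expanded product on the right.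
-/

/-- The set of lattice points of the half-open parallelepiped spanned by the
(real images of the) integer vectors `w₁, …, w_m`. -/
def latticePointsOfParallelepiped {n m : ℕ} (w : Fin m → (Fin n → ℤ)) : Set (Fin n → ℤ) :=
  {x | ∃ t : Fin m → ℝ, (∀ i, 0 < t i ∧ t i ≤ 1) ∧
    ∀ j, (x j : ℝ) = ∑ i, t i * (w i j : ℝ)}

open Finset

section Ceil

variable {α : Type*} [CommRing α] [LinearOrder α] [IsStrictOrderedRing α] [FloorSemiring α]

lemma Nat.ceil_add_natCast_of_mem_Ioc {t : α} (ht : t ∈ Set.Ioc 0 1) (g : ℕ) :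
    ⌈t + g⌉₊ = g + 1 := by
  rw [Nat.ceil_add_natCast ht.1.le, add_comm, (Nat.ceil_eq_iff one_ne_zero).2 (by simpa using ht)]

lemma exists_lt_sub_natCast_mem_Ioc {s : α} {N : ℕ} (hs : s ∈ Set.Ioc 0 (N : α)) :
    ∃ g < N, s - g ∈ Set.Ioc 0 1 := by
  have hceil : 1 ≤ ⌈s⌉₊ := Nat.one_le_iff_ne_zero.2 (Nat.ceil_pos.2 hs.1).ne'
  refine ⟨⌈s⌉₊ - 1, by have := Nat.ceil_le.2 hs.2; omega, ?_⟩
  rw [Nat.cast_sub hceil, Nat.cast_one]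
  constructor
  · linarith [Nat.ceil_lt_add_one hs.1.le]
  · linarith [Nat.le_ceil s]

end Ceil

lemma apply_add_nsmul_of_apply_add {M R : Type*} [AddMonoid M] [Monoid R] {h : M → R}
    {v : M} {c : R} (hh : ∀ x, h (x + v) = c * h x) (x : M) (k : ℕ) :
    h (x + k • v) = c ^ k * h x := by
  induction k with
  | zero => simp
  | succ k ih => rw [succ_nsmul, ← add_assoc, hh, ih, pow_succ', mul_assoc]

lemma apply_add_sum_nsmul_of_apply_add {M R ι : Type*} [AddCommMonoid M] [CommMonoid R]
    {h : M → R} {w : ι → M} {u : ι → R} (hh : ∀ x i, h (x + w i) = u i * h x)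
    (s : Finset ι) (g : ι → ℕ) (x : M) :
    h (x + ∑ i ∈ s, g i • w i) = (∏ i ∈ s, u i ^ g i) * h x := by
  classical
  induction s using Finset.induction_on with
  | empty => simp
  | insert a s ha ih =>
    rw [sum_insert ha, prod_insert ha, add_left_comm, add_comm,
      apply_add_nsmul_of_apply_add (hh · a), ih, mul_assoc]

lemma AddMonoidAlgebra.prod_sum_single {R M ι : Type*} [CommSemiring R] [AddCommMonoid M]
    [Fintype ι] [DecidableEq ι] {κ : ι → Type*} (s : ∀ i, Finset (κ i)) (f : ∀ i, κ i → M)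
    (c : ∀ i, κ i → R) :
    ∏ i, ∑ j ∈ s i, single (f i j) (c i j)
      = ∑ p ∈ Fintype.piFinset s, single (∑ i, f i (p i)) (∏ i, c i (p i)) := by
  simp only [prod_univ_sum, AddMonoidAlgebra.prod_single]

def intCastVec (n : ℕ) : (Fin n → ℤ) →+ (Fin n → ℝ) := (Int.castAddHom ℝ).compLeft (Fin n)

@[simp] lemma intCastVec_apply {n : ℕ} (x : Fin n → ℤ) (j : Fin n) : intCastVec n x j = x j := rfl

section Parallelepiped

variable {n m : ℕ} (w : Fin m → Fin n → ℤ)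

lemma intCastVec_add_sum_nsmul (x : Fin n → ℤ) (g : Fin m → ℕ) :
    intCastVec n (x + ∑ i, g i • w i) = intCastVec n x + ∑ i, (g i : ℝ) • intCastVec n (w i) := by
  simp only [map_add, map_sum, map_nsmul, Nat.cast_smul_eq_nsmul]

lemma linearIndependent_intCastVec (hw : LinearIndependent ℚ fun i j => (w i j : ℚ)) :
    LinearIndependent ℝ fun i => intCastVec n (w i) := by
  have hcast : (fun i => intCastVec n (w i)) = fun i => algebraMap ℚ ℝ ∘ fun j => (w i j : ℚ) := by
    ext
    simp
  rw [hcast]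
  exact linearIndependent_algebraMap_comp_iff.2 hw

lemma mem_latticePointsOfParallelepiped_iff {x : Fin n → ℤ} :
    x ∈ latticePointsOfParallelepiped w ↔
      ∃ t : Fin m → ℝ, (∀ i, t i ∈ Set.Ioc 0 1) ∧ intCastVec n x = ∑ i, t i • intCastVec n (w i) := by
  simp only [latticePointsOfParallelepiped, Set.mem_ofPred_eq, Set.mem_Ioc, funext_iff,
    Finset.sum_apply, Pi.smul_apply, smul_eq_mul, intCastVec_apply]

lemma mem_latticePointsOfParallelepiped_nsmul_iff {N : ℕ} (hN : 0 < N) {x : Fin n → ℤ} :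
    x ∈ latticePointsOfParallelepiped (fun i => N • w i) ↔
      ∃ s : Fin m → ℝ, (∀ i, s i ∈ Set.Ioc 0 (N : ℝ)) ∧
        intCastVec n x = ∑ i, s i • intCastVec n (w i) := by
  have hN' : (0 : ℝ) < N := Nat.cast_pos.2 hN
  simp only [mem_latticePointsOfParallelepiped_iff, map_nsmul, ← Nat.cast_smul_eq_nsmul ℝ,
    smul_smul]
  constructor
  · rintro ⟨t, ht, hx⟩
    refine ⟨fun i => t i * N, fun i => ⟨?_, ?_⟩, hx⟩
    · exact mul_pos (ht i).1 hN'
    · exact mul_le_of_le_one_left hN'.le (ht i).2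
  · rintro ⟨s, hs, hx⟩
    refine ⟨fun i => s i / N, fun i => ⟨?_, ?_⟩, ?_⟩
    · exact div_pos (hs i).1 hN'
    · exact div_le_one_of_le₀ (hs i).2 hN'.le
    · simpa only [div_mul_cancel₀ _ hN'.ne'] using hx

lemma latticePointsOfParallelepiped_finite : (latticePointsOfParallelepiped w).Finite := by
  refine (Set.finite_Icc (-fun j => ∑ i, |w i j|) fun j => ∑ i, |w i j|).subset ?_
  rintro x ⟨t, ht, hx⟩
  have hbound : ∀ j, |x j| ≤ ∑ i, |w i j| := fun j => by
    have : |(x j : ℝ)| ≤ ∑ i, |(w i j : ℝ)| := by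
      rw [hx j]
      refine (abs_sum_le_sum_abs _ _).trans (sum_le_sum fun i _ => ?_)
      rw [abs_mul]
      exact mul_le_of_le_one_left (abs_nonneg _) (abs_le.2 ⟨by linarith [(ht i).1], (ht i).2⟩)
    exact_mod_cast this
  exact ⟨fun j => neg_le_of_abs_le (hbound j), fun j => le_of_abs_le (hbound j)⟩

lemma mapsTo_add_sum_nsmul_latticePointsOfParallelepiped {N : ℕ} (hN : 0 < N) :
    Set.MapsTo (fun p : (Fin n → ℤ) × (Fin m → ℕ) => p.1 + ∑ i, p.2 i • w i)
      (latticePointsOfParallelepiped w ×ˢ Set.univ.pi fun _ => Set.Iio N)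
      (latticePointsOfParallelepiped fun i => N • w i) := by
  rintro ⟨x, g⟩ ⟨hx, hg⟩
  obtain ⟨t, ht, hxt⟩ := (mem_latticePointsOfParallelepiped_iff w).1 hx
  have hgN : ∀ i, (g i : ℝ) + 1 ≤ N := fun i => by
    exact_mod_cast hg i (Set.mem_univ i)
  refine (mem_latticePointsOfParallelepiped_nsmul_iff w hN).2
    ⟨fun i => t i + g i, fun i => ⟨?_, ?_⟩, ?_⟩
  · exact add_pos_of_pos_of_nonneg (ht i).1 (Nat.cast_nonneg _)
  · linarith [(ht i).2, hgN i]
  · simp only [intCastVec_add_sum_nsmul, hxt, add_smul, sum_add_distrib]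

lemma injOn_add_sum_nsmul_latticePointsOfParallelepiped
    (hw : LinearIndependent ℚ fun i j => (w i j : ℚ)) :
    Set.InjOn (fun p : (Fin n → ℤ) × (Fin m → ℕ) => p.1 + ∑ i, p.2 i • w i)
      (latticePointsOfParallelepiped w ×ˢ Set.univ) := by
  rintro ⟨x, g⟩ ⟨hx, -⟩ ⟨x', g'⟩ ⟨hx', -⟩ heq
  obtain ⟨t, ht, hxt⟩ := (mem_latticePointsOfParallelepiped_iff w).1 hx
  obtain ⟨t', ht', hxt'⟩ := (mem_latticePointsOfParallelepiped_iff w).1 hx'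
  have hcoef : ∀ i, t i + g i = t' i + g' i :=
    Fintype.linearIndependent_iffₛ.1 (linearIndependent_intCastVec w hw) _ _ <| by
      simpa only [intCastVec_add_sum_nsmul, hxt, hxt', add_smul, sum_add_distrib]
        using congrArg (intCastVec n) heq
  have hg : g = g' := funext fun i =>
    Nat.add_right_cancel <| (Nat.ceil_add_natCast_of_mem_Ioc (ht i) (g i)).symm.trans
      (hcoef i ▸ Nat.ceil_add_natCast_of_mem_Ioc (ht' i) (g' i))
  subst hg
  exact Prod.ext (add_right_cancel heq) rfl

lemma surjOn_add_sum_nsmul_latticePointsOfParallelepiped {N : ℕ} (hN : 0 < N) :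
    Set.SurjOn (fun p : (Fin n → ℤ) × (Fin m → ℕ) => p.1 + ∑ i, p.2 i • w i)
      (latticePointsOfParallelepiped w ×ˢ Set.univ.pi fun _ => Set.Iio N)
      (latticePointsOfParallelepiped fun i => N • w i) := by
  intro y hy
  obtain ⟨s, hs, hys⟩ := (mem_latticePointsOfParallelepiped_nsmul_iff w hN).1 hy
  choose g hgN hgs using fun i => exists_lt_sub_natCast_mem_Ioc (hs i)
  refine ⟨(y - ∑ i, g i • w i, g), ⟨(mem_latticePointsOfParallelepiped_iff w).2
    ⟨fun i => s i - g i, hgs, ?_⟩, by simpa using hgN⟩, sub_add_cancel _ _⟩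
  have := intCastVec_add_sum_nsmul w (y - ∑ i, g i • w i) g
  rw [sub_add_cancel, hys] at this
  simp only [sub_smul, sum_sub_distrib, this, add_sub_cancel_right]

end Parallelepiped

/-- for a commutative ring `R`, `ℚ`-linearly independent `w₁, …, w_m ∈ ℤⁿ`,
`N ≥ 1`, `u₁, …, u_m ∈ R` and `h : ℤⁿ → R` with `h(x + wᵢ) = uᵢ·h(x)`, one has in `R[ℤⁿ]`:
`∑_{x ∈ ℤⁿ ∩ P(Nw₁, …, Nw_m)} h(x)[x]
  = (∑_{x ∈ ℤⁿ ∩ P(w₁, …, w_m)} h(x)[x]) · ∏ᵢ (∑_{j=0}^{N-1} uᵢʲ·[j·wᵢ])`. -/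
theorem sum_lattice_points_smul_parallelepiped_eq_mul_geometric
    (R : Type*) [CommRing R] {n m : ℕ} (w : Fin m → (Fin n → ℤ))
    (hw : LinearIndependent ℚ fun i => fun j => ((w i j : ℚ)))
    (N : ℕ) (hN : 1 ≤ N) (u : Fin m → R) (h : (Fin n → ℤ) → R)
    (hh : ∀ x : Fin n → ℤ, ∀ i, h (x + w i) = u i * h x) :
    (∑ᶠ x ∈ latticePointsOfParallelepiped (fun i => N • w i),
        AddMonoidAlgebra.single x (h x))
      = (∑ᶠ x ∈ latticePointsOfParallelepiped w, AddMonoidAlgebra.single x (h x))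
        * ∏ i : Fin m, ∑ j ∈ Finset.range N,
            AddMonoidAlgebra.single (j • w i) (u i ^ j) := by
  classical
  have hP := latticePointsOfParallelepiped_finite w
  have hQ := latticePointsOfParallelepiped_finite fun i => N • w i
  have hcoe : (↑(hP.toFinset ×ˢ Fintype.piFinset fun _ : Fin m => range N) :
      Set ((Fin n → ℤ) × (Fin m → ℕ))) =
      latticePointsOfParallelepiped w ×ˢ Set.univ.pi fun _ => Set.Iio N := by
    simp
  rw [finsum_mem_eq_finite_toFinset_sum _ hQ, finsum_mem_eq_finite_toFinset_sum _ hP,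
    AddMonoidAlgebra.prod_sum_single, sum_mul_sum, ← sum_product']
  symm
  refine sum_nbij (fun p => p.1 + ∑ i, p.2 i • w i) ?_ ?_ ?_ ?_
  · intro p hp
    simpa using mapsTo_add_sum_nsmul_latticePointsOfParallelepiped w hN (hcoe ▸ hp)
  · rw [hcoe]
    exact (injOn_add_sum_nsmul_latticePointsOfParallelepiped w hw).mono
      (Set.prod_mono le_rfl (Set.subset_univ _))
  · rw [hcoe, hQ.coe_toFinset]
    exact surjOn_add_sum_nsmul_latticePointsOfParallelepiped w hN
  · rintro ⟨x, g⟩ -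
    rw [AddMonoidAlgebra.single_mul_single, apply_add_sum_nsmul_of_apply_add hh, mul_comm]
end

section
/- Let P ∈ ℚ[X₁, …, X_n] be a polynomial of total degree at most d that takes integer values on ℤⁿ (P(v) ∈ ℤ for all v ∈ ℤⁿ). Then the ℤ-linear map λ_P : ℤ[ℤⁿ] → ℤ determined by λ_P([v]) = P(v) for v ∈ ℤⁿ vanishes identically on I^{d+1}, and hence induces a well-defined ℤ-linear map ℤ[ℤⁿ]/I^{d+1} → ℤ (equivalently, λ_P extends continuously to the augmentation-adic completion ℤ[[ℤⁿ]] with values in ℤ). -/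
/-!
A map `f` on an abelian group has degree `< d` if every `d`-fold iterated forward difference
`Δ_[g₁] ⋯ Δ_[g_d] f` vanishes. By the discrete Leibniz rule these degrees add under products, and
coordinate functions have degree `≤ 1`, so `v ↦ P(v)` has degree `≤ totalDegree P`.

If `a = ∑ a_g [g]` lies in the augmentation ideal, then `∑ a_g = 0`, so
`λ_f (y * a) = ∑ a_g λ_{f(· + g)} y = ∑ a_g λ_{Δ_[g] f} y`. Induction on `d` then shows that
`λ_f` kills `I ^ d` whenever `f` has degree `< d`.
-/

open Finsupp MvPolynomial fwdDiff

/-- Polynomial maps of degree `< d` (in Leibman's sense): the zero map is the only one of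
degree `< 0`, and the constants are those of degree `< 1`. -/
def polyMapsDegLT (G M : Type*) [AddCommMonoid G] [AddCommGroup M] : ℕ → AddSubgroup (G → M)
  | 0 => ⊥
  | d + 1 => ⨅ h, (polyMapsDegLT G M d).comap (fwdDiff_aux.fwdDiffₗ G M h).toAddMonoidHom

theorem fwdDiff_mul {G A : Type*} [AddCommMonoid G] [CommRing A] (h : G) (f g : G → A) :
    Δ_[h] (f * g) = Δ_[h] f * g + f * Δ_[h] g + Δ_[h] f * Δ_[h] g := by
  ext x
  simp only [fwdDiff, Pi.mul_apply, Pi.add_apply]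
  ring

namespace polyMapsDegLT

variable {G M : Type*} [AddCommMonoid G] [AddCommGroup M]

@[simp] theorem mem_zero {f : G → M} : f ∈ polyMapsDegLT G M 0 ↔ f = 0 :=
  AddSubgroup.mem_bot

theorem mem_succ {d : ℕ} {f : G → M} :
    f ∈ polyMapsDegLT G M (d + 1) ↔ ∀ h, Δ_[h] f ∈ polyMapsDegLT G M d := by
  simp [polyMapsDegLT, AddSubgroup.mem_iInf, fwdDiff_aux.coe_fwdDiffₗ]

theorem mono : Monotone (polyMapsDegLT G M) := by
  refine monotone_nat_of_le_succ fun d => ?_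
  induction d with
  | zero => intro f hf; simp_all
  | succ d ih => exact fun f hf => mem_succ.2 fun h => ih (mem_succ.1 hf h)

theorem const_mem (c : M) : (fun _ => c : G → M) ∈ polyMapsDegLT G M 1 :=
  mem_succ.2 fun h => mem_zero.2 (fwdDiff_const h c)

theorem addMonoidHom_mem (φ : G →+ M) : ⇑φ ∈ polyMapsDegLT G M 2 := by
  refine mem_succ.2 fun h => ?_
  have hΔ : Δ_[h] φ = fun _ => φ h := by
    ext x
    simp [fwdDiff]
  exact hΔ ▸ const_mem (φ h)

variable {A : Type*} [CommRing A]

theorem mul_mem {a b : ℕ} {f g : G → A} (hf : f ∈ polyMapsDegLT G A a)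
    (hg : g ∈ polyMapsDegLT G A b) : f * g ∈ polyMapsDegLT G A (a + b - 1) := by
  induction a generalizing b f g with
  | zero => simp_all
  | succ a iha =>
    induction b generalizing f g with
    | zero => simp_all
    | succ b ihb =>
      rw [show a + 1 + (b + 1) - 1 = a + b + 1 by omega]
      refine mem_succ.2 fun h => ?_
      have hf' := mem_succ.1 hf h
      have hg' := mem_succ.1 hg h
      rw [fwdDiff_mul]
      refine add_mem (add_mem ?_ ?_) (mono (by omega) (iha hf' hg'))
      · exact mono (by omega) (iha hf' hg)
      · exact mono (by omega) (ihb hf hg')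

instance gradedMonoid : SetLike.GradedMonoid fun d => polyMapsDegLT G A (d + 1) where
  one_mem := const_mem 1
  mul_mem _ _ _ _ hf hg := by convert mul_mem hf hg using 2; omega

variable {σ : Type*} {x : σ → G → A}

theorem aeval_monomial_mem (hx : ∀ i, x i ∈ polyMapsDegLT G A 2) (s : σ →₀ ℕ) (c : A) :
    aeval x (monomial s c) ∈ polyMapsDegLT G A (s.degree + 1) := by
  rw [aeval_monomial, Finsupp.prod]
  have hc : algebraMap A (G → A) c ∈ polyMapsDegLT G A (0 + 1) := const_mem c
  have hprod := SetLike.prod_pow_mem_graded (fun d => polyMapsDegLT G A (d + 1)) (fun _ => 1) x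
    (F := s.support) s (fun i _ => hx i)
  have := SetLike.mul_mem_graded (A := fun d => polyMapsDegLT G A (d + 1)) hc hprod
  simpa [degree_apply, add_comm] using this

theorem aeval_mem (hx : ∀ i, x i ∈ polyMapsDegLT G A 2) (Q : MvPolynomial σ A) :
    aeval x Q ∈ polyMapsDegLT G A (Q.totalDegree + 1) := by
  have hdeg {s} (hs : s ∈ Q.support) : s.degree + 1 ≤ Q.totalDegree + 1 := by
    simpa [degree_apply, Finsupp.sum] using le_totalDegree hs
  have := sum_mem fun s hs => mono (hdeg hs) (aeval_monomial_mem hx s (Q.coeff s))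
  rwa [← map_sum, ← as_sum] at this

end polyMapsDegLT

theorem MvPolynomial.aeval_pi_apply {G A σ : Type*} [CommRing A] (x : σ → G → A)
    (Q : MvPolynomial σ A) (v : G) : aeval x Q v = eval (fun i => x i v) Q := by
  induction Q using MvPolynomial.induction_on <;> simp_all

section augmentation

open AddMonoidAlgebra

variable {R G M : Type*} [CommRing R] [AddCommMonoid G] [AddCommGroup M] [Module R M]

theorem linearCombination_coeff_mul (f : G → M) (y a : R[G]) :
    linearCombination R f (y * a).coeff =
      a.coeff.sum fun g r => r • linearCombination R (fun w => f (w + g)) y.coeff := by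
  induction y using AddMonoidAlgebra.induction_linear with
  | zero => simp
  | add y z hy hz => simp [add_mul, hy, hz, Finsupp.sum_add]
  | single w c =>
    induction a using AddMonoidAlgebra.induction_linear with
    | zero => simp
    | add a b ha hb => simp [mul_add, ha, hb, Finsupp.sum_add_index', add_smul]
    | single g r =>
      rw [single_mul_single, coeff_single, coeff_single, coeff_single,
        Finsupp.sum_single_index (by rw [zero_smul]), linearCombination_single,
        linearCombination_single, smul_comm, mul_smul]

theorem AddMonoidAlgebra.lift_one_apply (a : R[G]) :
    AddMonoidAlgebra.lift R R G 1 a = a.coeff.sum fun _ r => r := by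
  simp only [AddMonoidAlgebra.lift_apply, MonoidHom.one_apply, smul_eq_mul, mul_one]

theorem linearCombination_coeff_mul_of_mem_ker (f : G → M) (y : R[G]) {a : R[G]}
    (ha : a ∈ RingHom.ker (AddMonoidAlgebra.lift R R G 1)) :
    linearCombination R f (y * a).coeff =
      a.coeff.sum fun g r => r • linearCombination R (Δ_[g] f) y.coeff := by
  have hε : ∑ g ∈ a.coeff.support, a.coeff g = 0 := by
    rwa [RingHom.mem_ker, lift_one_apply] at ha
  have hΔ (g : G) : linearCombination R (Δ_[g] f) y.coeff =
      linearCombination R (fun w => f (w + g)) y.coeff - linearCombination R f y.coeff := by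
    simp only [linearCombination_apply, fwdDiff, smul_sub, Finsupp.sum_sub]
  simp only [linearCombination_coeff_mul, hΔ, smul_sub, Finsupp.sum_sub]
  simp only [Finsupp.sum, ← Finset.sum_smul, hε, zero_smul, sub_zero]

theorem linearCombination_coeff_eq_zero_of_mem_pow_ker {d : ℕ} {f : G → M}
    (hf : f ∈ polyMapsDegLT G M d) {x : R[G]}
    (hx : x ∈ RingHom.ker (AddMonoidAlgebra.lift R R G 1) ^ d) :
    linearCombination R f x.coeff = 0 := by
  induction d generalizing f x with
  | zero => simp_all
  | succ d ih =>
    rw [pow_succ] at hx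
    refine Submodule.mul_induction_on hx (fun y hy a ha => ?_) (fun y z hy hz => ?_)
    · rw [linearCombination_coeff_mul_of_mem_ker f y ha]
      simp [ih (polyMapsDegLT.mem_succ.1 hf _) hy]
    · simp [hy, hz]

end augmentation

/-- if `P ∈ ℚ[X₁, …, Xₙ]` has total degree at most `d` and takes integer
values on `ℤⁿ` (witnessed by `Pz`), then the `ℤ`-linear map `λ_P : ℤ[ℤⁿ] → ℤ` determined by
`[v] ↦ P(v)` vanishes on the `(d+1)`-st power of the augmentation ideal `I`; hence it
extends continuously to the `I`-adic completion `ℤ[[ℤⁿ]]` with values in `ℤ`. -/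
theorem integer_valued_polynomial_eval_vanishes_on_pow_augmentation_ideal
    (n d : ℕ) (P : MvPolynomial (Fin n) ℚ) (hP : P.totalDegree ≤ d)
    (Pz : (Fin n → ℤ) → ℤ)
    (hPz : ∀ v : Fin n → ℤ, (Pz v : ℚ) = MvPolynomial.eval (fun i => (v i : ℚ)) P)
    (x : AddMonoidAlgebra ℤ (Fin n → ℤ))
    (hx : x ∈ (RingHom.ker ((AddMonoidAlgebra.lift ℤ ℤ (Fin n → ℤ)) 1)) ^ (d + 1)) :
    Finsupp.linearCombination ℤ Pz x.coeff = 0 := by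
  have hcoord (i : Fin n) : (fun v : Fin n → ℤ => (v i : ℚ)) ∈ polyMapsDegLT _ ℚ 2 :=
    polyMapsDegLT.addMonoidHom_mem ((Int.castAddHom ℚ).comp (Pi.evalAddMonoidHom (fun _ : Fin n => ℤ) i))
  have hPz_mem : (fun v => (Pz v : ℚ)) ∈ polyMapsDegLT _ ℚ (d + 1) := by
    convert polyMapsDegLT.mono (Nat.succ_le_succ hP) (polyMapsDegLT.aeval_mem hcoord P) using 1
    ext v
    rw [hPz, aeval_pi_apply]
  have hcast : ((linearCombination ℤ Pz x.coeff : ℤ) : ℚ) =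
      linearCombination ℤ (fun v => (Pz v : ℚ)) x.coeff :=
    apply_linearCombination ℤ (Int.castAddHom ℚ).toIntLinearMap Pz x.coeff
  exact_mod_cast hcast.trans (linearCombination_coeff_eq_zero_of_mem_pow_ker hPz_mem hx)
end
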